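/- arXiv:math/0410004 — 6 statements merged into one kernel-verified Lean document; each statement's English description precedes it below -/
import Mathlib

section
/- For every ε with 0 < ε ≤ 1, Δ(ε) ≥ ε²/2; that is, every measurable subset of [0,1) with Lebesgue measure ε contains, for every η > 0, a measurable symmetric subset with measure at least ε²/2 − η. -/
open MeasureTheory

/-- A set `C ⊆ ℝ` is symmetric if there is a center `c` with `c + x ∈ C ↔ c - x ∈ C`. -/
def IsSymmetricSet (C : Set ℝ) : Prop := ∃ c : ℝ, ∀ x : ℝ, c + x ∈ C ↔ c - x ∈ C

/-- `DD A` is the supremum of measures of measurable symmetric subsets of `A`. -/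
noncomputable def DD (A : Set ℝ) : ℝ :=
  sSup {m : ℝ | ∃ C : Set ℝ, C ⊆ A ∧ MeasurableSet C ∧ IsSymmetricSet C ∧ m = (volume C).toReal}

/-- `Δ ε` is the infimum of `DD A` over measurable `A ⊆ [0,1)` with measure `ε`. -/
noncomputable def Δ (ε : ℝ) : ℝ :=
  sInf {d : ℝ | ∃ A : Set ℝ, A ⊆ Set.Ico (0:ℝ) 1 ∧ MeasurableSet A ∧
    volume A = ENNReal.ofReal ε ∧ d = DD A}

lemma inner_int (A : Set ℝ) (hA : MeasurableSet A) (y : ℝ) :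
    ∫⁻ c : ℝ, A.indicator 1 (2 * c - y) = volume A / 2 := by
  have h1 : (fun c : ℝ => A.indicator (1 : ℝ → ENNReal) (2 * c - y))
      = ((fun c : ℝ => 2 * c - y) ⁻¹' A).indicator 1 := by
    funext c
    by_cases h : 2 * c - y ∈ A <;> simp [Set.indicator, h]
  rw [h1, lintegral_indicator_one]
  · have h2 : (fun c : ℝ => 2 * c - y) ⁻¹' A
        = (fun c : ℝ => 2 * c) ⁻¹' ((fun z : ℝ => z - y) ⁻¹' A) := rfl
    rw [h2, Real.volume_preimage_mul_left (two_ne_zero (α := ℝ))]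
    have h3 : volume ((fun z : ℝ => z - y) ⁻¹' A) = volume A := by
      simp [sub_eq_add_neg]
    rw [h3]
    have : |(2:ℝ)⁻¹| = (2:ℝ)⁻¹ := abs_of_pos (by norm_num)
    rw [this, ENNReal.ofReal_inv_of_pos (by norm_num : (0:ℝ) < 2)]
    simp [ENNReal.div_eq_inv_mul, ENNReal.ofReal_ofNat]
  · exact (measurable_const_mul 2).sub measurable_const hA

lemma total_int (A : Set ℝ) (hA : MeasurableSet A) :
    ∫⁻ c : ℝ, volume (A ∩ (fun y : ℝ => 2 * c - y) ⁻¹' A)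
      = volume A * (volume A / 2) := by
  have hrefl : ∀ c : ℝ, Measurable (fun y : ℝ => 2 * c - y) := fun c =>
    measurable_const.sub measurable_id
  have hCm : ∀ c : ℝ, MeasurableSet (A ∩ (fun y : ℝ => 2 * c - y) ⁻¹' A) := fun c =>
    hA.inter ((hrefl c) hA)
  have step1 : ∀ c : ℝ, volume (A ∩ (fun y : ℝ => 2 * c - y) ⁻¹' A)
      = ∫⁻ y : ℝ, A.indicator 1 y * A.indicator 1 (2 * c - y) := by
    intro c
    rw [← lintegral_indicator_one (hCm c)]
    congr 1
    funext y
    by_cases h1 : y ∈ A <;> by_cases h2 : 2 * c - y ∈ A <;>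
      simp [Set.indicator, h1, h2]
  simp_rw [step1]
  have hmeas : Measurable (fun p : ℝ × ℝ =>
      A.indicator (1 : ℝ → ENNReal) p.2 * A.indicator 1 (2 * p.1 - p.2)) := by
    apply Measurable.mul
    · exact (measurable_one.indicator hA).comp measurable_snd
    · exact (measurable_one.indicator hA).comp
        ((measurable_fst.const_mul 2).sub measurable_snd)
  rw [lintegral_lintegral_swap hmeas.aemeasurable]
  have step2 : ∀ y : ℝ, ∫⁻ c : ℝ, A.indicator (1 : ℝ → ENNReal) y * A.indicator 1 (2 * c - y)
      = A.indicator 1 y * (volume A / 2) := by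
    intro y
    have hm : Measurable (fun c : ℝ => A.indicator (1 : ℝ → ENNReal) (2 * c - y)) :=
      (measurable_one.indicator hA).comp ((measurable_const_mul 2).sub measurable_const)
    rw [lintegral_const_mul _ hm, inner_int A hA y]
  simp_rw [step2]
  rw [lintegral_mul_const _ (measurable_one.indicator hA), lintegral_indicator_one hA]

lemma key (A : Set ℝ) (hA : MeasurableSet A) (hsub : A ⊆ Set.Ico (0:ℝ) 1)
    {ε η : ℝ} (hvol : volume A = ENNReal.ofReal ε) (hε0 : 0 < ε) (hη : 0 < η) :
    ∃ c : ℝ, ENNReal.ofReal (ε^2/2 - η) ≤ volume (A ∩ (fun y : ℝ => 2 * c - y) ⁻¹' A) := by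
  by_contra hcon
  push_neg at hcon
  set g : ℝ → ENNReal := fun c => volume (A ∩ (fun y : ℝ => 2 * c - y) ⁻¹' A) with hg
  have hzero : ∀ c : ℝ, c ∉ Set.Ico (0:ℝ) 1 → g c = 0 := by
    intro c hc
    have : A ∩ (fun y : ℝ => 2 * c - y) ⁻¹' A = ∅ := by
      ext y
      simp only [Set.mem_inter_iff, Set.mem_preimage, Set.mem_empty_iff_false, iff_false]
      rintro ⟨hy1, hy2⟩
      have h1 := hsub hy1
      have h2 := hsub hy2
      simp only [Set.mem_Ico] at h1 h2 hc
      exact hc ⟨by linarith [h1.1, h2.1], by linarith [h1.2, h2.2]⟩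
    rw [hg]; simp [this]
  have hind : ∀ c : ℝ, g c = (Set.Ico (0:ℝ) 1).indicator g c := by
    intro c
    by_cases hc : c ∈ Set.Ico (0:ℝ) 1
    · simp [hc]
    · simp [hc, hzero c hc]
  have htot : ∫⁻ c : ℝ, g c = ENNReal.ofReal ε * (ENNReal.ofReal ε / 2) := by
    rw [hg]
    simpa [hvol] using total_int A hA
  have hset : ∫⁻ c in Set.Ico (0:ℝ) 1, g c = ENNReal.ofReal ε * (ENNReal.ofReal ε / 2) := by
    rw [← lintegral_indicator measurableSet_Ico, ← htot]
    exact lintegral_congr fun c => (hind c).symm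
  have hbound : ∫⁻ c in Set.Ico (0:ℝ) 1, g c ≤ ENNReal.ofReal (ε^2/2 - η) * 1 := by
    calc ∫⁻ c in Set.Ico (0:ℝ) 1, g c
        ≤ ∫⁻ _ in Set.Ico (0:ℝ) 1, ENNReal.ofReal (ε^2/2 - η) :=
          setLIntegral_mono' measurableSet_Ico fun c _ => (hcon c).le
      _ = ENNReal.ofReal (ε^2/2 - η) * 1 := by simp [Real.volume_Ico]
  rw [hset] at hbound
  have heq : ENNReal.ofReal ε * (ENNReal.ofReal ε / 2) = ENNReal.ofReal (ε^2/2) := by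
    rw [← ENNReal.ofReal_ofNat, ← ENNReal.ofReal_div_of_pos (by norm_num),
        ← ENNReal.ofReal_mul hε0.le]
    ring_nf
  rw [heq, mul_one] at hbound
  have hlt : ENNReal.ofReal (ε^2/2 - η) < ENNReal.ofReal (ε^2/2) :=
    (ENNReal.ofReal_lt_ofReal_iff (by positivity)).2 (by linarith)
  exact absurd hbound hlt.not_ge

theorem delta_trivial_lower_bound :
    (∀ ε : ℝ, 0 < ε → ε ≤ 1 → ε^2/2 ≤ Δ ε) ∧
    (∀ ε : ℝ, 0 < ε → ε ≤ 1 → ∀ A : Set ℝ, A ⊆ Set.Ico (0:ℝ) 1 → MeasurableSet A →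
      volume A = ENNReal.ofReal ε → ∀ η : ℝ, 0 < η →
        ∃ C : Set ℝ, C ⊆ A ∧ MeasurableSet C ∧ IsSymmetricSet C ∧
          ε^2/2 - η ≤ (volume C).toReal) := by
  have part2 : ∀ ε : ℝ, 0 < ε → ε ≤ 1 → ∀ A : Set ℝ, A ⊆ Set.Ico (0:ℝ) 1 → MeasurableSet A →
      volume A = ENNReal.ofReal ε → ∀ η : ℝ, 0 < η →
        ∃ C : Set ℝ, C ⊆ A ∧ MeasurableSet C ∧ IsSymmetricSet C ∧
          ε^2/2 - η ≤ (volume C).toReal := by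
    intro ε hε0 hε1 A hsub hA hvol η hη
    obtain ⟨c, hc⟩ := key A hA hsub hvol hε0 hη
    refine ⟨A ∩ (fun y : ℝ => 2 * c - y) ⁻¹' A, Set.inter_subset_left,
      hA.inter ((measurable_const.sub measurable_id) hA), ⟨c, ?_⟩, ?_⟩
    · intro x
      have e1 : 2 * c - (c + x) = c - x := by ring
      have e2 : 2 * c - (c - x) = c + x := by ring
      constructor
      · rintro ⟨h1, h2⟩
        rw [Set.mem_preimage, e1] at h2
        exact ⟨h2, by rw [Set.mem_preimage, e2]; exact h1⟩
      · rintro ⟨h1, h2⟩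
        rw [Set.mem_preimage, e2] at h2
        exact ⟨h2, by rw [Set.mem_preimage, e1]; exact h1⟩
    · have hfin : volume (A ∩ (fun y : ℝ => 2 * c - y) ⁻¹' A) ≠ ⊤ := by
        refine ne_top_of_le_ne_top ?_ (measure_mono (Set.inter_subset_left.trans hsub))
        simp [Real.volume_Ico]
      calc ε^2/2 - η ≤ (ENNReal.ofReal (ε^2/2 - η)).toReal := by
            rcases le_or_gt 0 (ε^2/2 - η) with h | h
            · rw [ENNReal.toReal_ofReal h]
            · rw [ENNReal.ofReal_of_nonpos h.le]; simpa using h.le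
        _ ≤ (volume (A ∩ (fun y : ℝ => 2 * c - y) ⁻¹' A)).toReal :=
            ENNReal.toReal_mono hfin hc
  refine ⟨?_, part2⟩
  intro ε hε0 hε1
  have hnonempty : ∃ d : ℝ, d ∈ {d : ℝ | ∃ A : Set ℝ, A ⊆ Set.Ico (0:ℝ) 1 ∧ MeasurableSet A ∧
      volume A = ENNReal.ofReal ε ∧ d = DD A} := by
    refine ⟨DD (Set.Ico 0 ε), Set.Ico 0 ε, ?_, measurableSet_Ico, ?_, rfl⟩
    · exact Set.Ico_subset_Ico le_rfl hε1
    · simp [Real.volume_Ico]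
  apply le_csInf ⟨_, hnonempty.choose_spec⟩
  rintro d ⟨A, hsub, hA, hvol, rfl⟩
  -- DD A = sSup of T; show ε^2/2 ≤ sSup T
  set T := {m : ℝ | ∃ C : Set ℝ, C ⊆ A ∧ MeasurableSet C ∧ IsSymmetricSet C ∧
    m = (volume C).toReal} with hT
  have hTne : T.Nonempty := ⟨0, ∅, Set.empty_subset _, MeasurableSet.empty,
    ⟨0, fun x => by simp⟩, by simp⟩
  have hTbdd : BddAbove T := by
    refine ⟨1, ?_⟩
    rintro m ⟨C, hCsub, hCm, _, rfl⟩
    have : volume C ≤ 1 := by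
      have h := measure_mono (μ := (volume : Measure ℝ)) (hCsub.trans hsub)
      simpa [Real.volume_Ico] using h
    calc (volume C).toReal ≤ (1 : ENNReal).toReal := ENNReal.toReal_mono ENNReal.one_ne_top this
      _ = 1 := by simp
  have hsup : ∀ η : ℝ, 0 < η → ε^2/2 ≤ DD A + η := by
    intro η hη
    obtain ⟨C, hC1, hC2, hC3, hC4⟩ := part2 ε hε0 hε1 A hsub hA hvol η hη
    have hmem : (volume C).toReal ∈ T := ⟨C, hC1, hC2, hC3, rfl⟩
    have : (volume C).toReal ≤ DD A := le_csSup hTbdd hmem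
    linarith
  exact le_of_forall_pos_le_add hsup
end

section
/- If S and T are measurable subsets of ℝ with finite Lebesgue measure, then |D(S) − D(T)| ≤ 2λ(S ⊕ T), where S ⊕ T := (S \ T) ∪ (T \ S) is the symmetric difference of S and T. -/
open MeasureTheory

/-!
Reflect a symmetric set `C ⊆ S` about its center `c` by `σ x = 2c - x`. The part
`C ∩ T ∩ σ⁻¹ T` is still symmetric about `c` and lies in `T`, and what it misses of `C` is
covered by `C \ T` and its mirror image `σ⁻¹ (C \ T)`, so it loses at most `2 λ(S \ T)`.
Hence `D(S) ≤ D(T) + 2 λ(S \ T)`, and the theorem follows by exchanging `S` and `T`.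
-/

lemma IsSymmetricSet.exists_subset_measure_le {C T : Set ℝ} (hC : MeasurableSet C)
    (hT : MeasurableSet T) (hsymm : IsSymmetricSet C) :
    ∃ C' ⊆ T, MeasurableSet C' ∧ IsSymmetricSet C' ∧
      volume C ≤ volume C' + 2 * volume (C \ T) := by
  obtain ⟨c, hc⟩ := hsymm
  set σ : ℝ → ℝ := fun x => 2 * c - x
  have hσ : MeasurePreserving σ volume volume := Measure.measurePreserving_sub_left volume _
  have hCσ : ∀ x, σ x ∈ C ↔ x ∈ C := fun x => by
    have h := (hc (x - c)).symm
    rwa [add_sub_cancel, show c - (x - c) = σ x by simp only [σ]; ring] at h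
  refine ⟨C ∩ T ∩ σ ⁻¹' T, fun x hx => hx.1.2,
    (hC.inter hT).inter (hσ.measurable hT), ⟨c, fun x => ?_⟩, ?_⟩
  · have h₁ : σ (c + x) = c - x := by simp only [σ]; ring
    have h₂ : σ (c - x) = c + x := by simp only [σ]; ring
    simp only [Set.mem_inter_iff, Set.mem_preimage, h₁, h₂, hc x]
    tauto
  · have hcover : C ⊆ (C ∩ T ∩ σ ⁻¹' T) ∪ (C \ T) ∪ σ ⁻¹' (C \ T) := by
      intro x hx
      simp only [Set.mem_union, Set.mem_inter_iff, Set.mem_sdiff, Set.mem_preimage, hCσ]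
      tauto
    have hmirror : volume (σ ⁻¹' (C \ T)) = volume (C \ T) :=
      hσ.measure_preimage (hC.diff hT).nullMeasurableSet
    calc volume C ≤ volume ((C ∩ T ∩ σ ⁻¹' T) ∪ (C \ T) ∪ σ ⁻¹' (C \ T)) := measure_mono hcover
      _ ≤ volume (C ∩ T ∩ σ ⁻¹' T) + volume (C \ T) + volume (σ ⁻¹' (C \ T)) :=
        (measure_union_le _ _).trans (add_le_add_left (measure_union_le _ _) _)
      _ = volume (C ∩ T ∩ σ ⁻¹' T) + 2 * volume (C \ T) := by rw [hmirror, add_assoc, two_mul]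

lemma DD_nonneg (A : Set ℝ) : 0 ≤ DD A :=
  Real.sSup_nonneg <| by rintro _ ⟨C, -, -, -, rfl⟩; exact ENNReal.toReal_nonneg

lemma le_DD {A C : Set ℝ} (hA : volume A < ⊤) (hCA : C ⊆ A) (hC : MeasurableSet C)
    (hsymm : IsSymmetricSet C) : (volume C).toReal ≤ DD A := by
  refine le_csSup ⟨(volume A).toReal, ?_⟩ ⟨C, hCA, hC, hsymm, rfl⟩
  rintro _ ⟨C', hC'A, -, -, rfl⟩
  exact ENNReal.toReal_mono hA.ne (measure_mono hC'A)

lemma DD_le_DD_add_two_mul_diff {S T : Set ℝ} (hT : MeasurableSet T)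
    (hSfin : volume S < ⊤) (hTfin : volume T < ⊤) :
    DD S ≤ DD T + 2 * (volume (S \ T)).toReal := by
  refine Real.sSup_le ?_ (by positivity [DD_nonneg T])
  rintro _ ⟨C, hCS, hC, hsymm, rfl⟩
  obtain ⟨C', hC'T, hC', hsymm', hle⟩ := hsymm.exists_subset_measure_le hC hT
  have hdiff : volume (C \ T) ≤ volume (S \ T) := measure_mono (Set.sdiff_subset_sdiff_left hCS)
  have hdiff_fin : volume (S \ T) ≠ ⊤ := measure_ne_top_of_subset Set.sdiff_subset hSfin.ne
  calc (volume C).toReal ≤ (volume C').toReal + (2 * volume (S \ T)).toReal :=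
        ENNReal.toReal_le_add (hle.trans (by gcongr))
          (measure_ne_top_of_subset hC'T hTfin.ne) (ENNReal.mul_ne_top (by simp) hdiff_fin)
    _ ≤ DD T + 2 * (volume (S \ T)).toReal := by
        rw [ENNReal.toReal_mul, ENNReal.toReal_ofNat]
        gcongr
        exact le_DD hTfin hC'T hC' hsymm'

theorem D_symmDiff_lipschitz (S T : Set ℝ) (hS : MeasurableSet S) (hT : MeasurableSet T)
    (hSfin : volume S < ⊤) (hTfin : volume T < ⊤) :
    |DD S - DD T| ≤ 2 * (volume ((S \ T) ∪ (T \ S))).toReal := by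
  have hfin : volume ((S \ T) ∪ (T \ S)) ≠ ⊤ :=
    measure_union_ne_top (measure_ne_top_of_subset Set.sdiff_subset hSfin.ne)
      (measure_ne_top_of_subset Set.sdiff_subset hTfin.ne)
  have hST : (volume (S \ T)).toReal ≤ (volume ((S \ T) ∪ (T \ S))).toReal :=
    ENNReal.toReal_mono hfin (measure_mono Set.subset_union_left)
  have hTS : (volume (T \ S)).toReal ≤ (volume ((S \ T) ∪ (T \ S))).toReal :=
    ENNReal.toReal_mono hfin (measure_mono Set.subset_union_right)
  rw [abs_sub_le_iff]
  constructor
  · linarith [DD_le_DD_add_two_mul_diff hT hSfin hTfin]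
  · linarith [DD_le_DD_add_two_mul_diff hS hTfin hSfin]
end

section
/- The function Δ satisfies the Lipschitz condition |Δ(x) − Δ(y)| ≤ 2|x − y| for all x, y ∈ (0, 1]; in particular, Δ is continuous on (0, 1]. -/
open MeasureTheory

namespace DeltaLip

/-- The defining set of `DD`. -/
def DDset (A : Set ℝ) : Set ℝ :=
  {m : ℝ | ∃ C : Set ℝ, C ⊆ A ∧ MeasurableSet C ∧ IsSymmetricSet C ∧ m = (volume C).toReal}

lemma DD_eq (A : Set ℝ) : DD A = sSup (DDset A) := rfl

lemma zero_mem_DDset (A : Set ℝ) : (0:ℝ) ∈ DDset A := by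
  refine ⟨∅, Set.empty_subset _, MeasurableSet.empty, ⟨0, fun x => by simp⟩, by simp⟩

lemma vol_le_one {A : Set ℝ} (hA : A ⊆ Set.Ico (0:ℝ) 1) : volume A ≤ 1 := by
  calc volume A ≤ volume (Set.Ico (0:ℝ) 1) := measure_mono hA
    _ = 1 := by simp [Real.volume_Ico]

lemma vol_ne_top {A : Set ℝ} (hA : A ⊆ Set.Ico (0:ℝ) 1) : volume A ≠ ⊤ :=
  fun h => by simpa [h] using vol_le_one hA

lemma bddAbove_DDset {A : Set ℝ} (hA : A ⊆ Set.Ico (0:ℝ) 1) : BddAbove (DDset A) := by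
  refine ⟨1, ?_⟩
  rintro m ⟨C, hCA, -, -, rfl⟩
  have h1 : volume C ≤ ENNReal.ofReal 1 := by
    simpa using vol_le_one (hCA.trans hA)
  exact ENNReal.toReal_le_of_le_ofReal one_pos.le h1

lemma DD_nonneg {A : Set ℝ} (hA : A ⊆ Set.Ico (0:ℝ) 1) : 0 ≤ DD A :=
  le_csSup (bddAbove_DDset hA) (zero_mem_DDset A)

lemma DD_mono {A B : Set ℝ} (hAB : A ⊆ B) (hB : B ⊆ Set.Ico (0:ℝ) 1) : DD A ≤ DD B := by
  apply csSup_le_csSup (bddAbove_DDset hB) ⟨0, zero_mem_DDset A⟩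
  rintro m ⟨C, hCA, h1, h2, h3⟩
  exact ⟨C, hCA.trans hAB, h1, h2, h3⟩

lemma DD_le_add {A B : Set ℝ} (hAB : A ⊆ B) (hB : B ⊆ Set.Ico (0:ℝ) 1)
    (hAm : MeasurableSet A) (hBm : MeasurableSet B) :
    DD B ≤ DD A + 2 * (volume (B \ A)).toReal := by
  apply csSup_le ⟨0, zero_mem_DDset B⟩
  rintro m ⟨C, hCB, hCm, ⟨c, hc⟩, rfl⟩
  set E : Set ℝ := B \ A with hE
  have hEm : MeasurableSet E := hBm.diff hAm
  set r : ℝ → ℝ := fun y => 2 * c - y with hr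
  have hrm : Measurable r := measurable_const.sub measurable_id
  set C' : Set ℝ := C \ (E ∪ r ⁻¹' E) with hC'
  have hC'm : MeasurableSet C' := hCm.diff (hEm.union (hrm hEm))
  have hC'A : C' ⊆ A := by
    rintro y ⟨hyC, hyE⟩
    have hyB : y ∈ B := hCB hyC
    by_contra hyA
    exact hyE (Or.inl ⟨hyB, hyA⟩)
  have hsym : IsSymmetricSet C' := by
    refine ⟨c, fun x => ?_⟩
    have h1 : r (c + x) = c - x := by simp [hr]; ring
    have h2 : r (c - x) = c + x := by simp [hr]; ring
    simp only [hC', Set.mem_diff, Set.mem_union, Set.mem_preimage, h1, h2, hc x]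
    tauto
  have hC'mem : (volume C').toReal ∈ DDset A := ⟨C', hC'A, hC'm, hsym, rfl⟩
  have hle1 : (volume C').toReal ≤ DD A :=
    le_csSup (bddAbove_DDset (hAB.trans hB)) hC'mem
  -- measure of preimage under reflection
  have hmp : MeasurePreserving r volume volume := Measure.measurePreserving_sub_left volume (2 * c)
  have hpre : volume (r ⁻¹' E) = volume E := hmp.measure_preimage hEm.nullMeasurableSet
  have hsub : C ⊆ C' ∪ (E ∪ r ⁻¹' E) := by
    intro y hy
    by_cases h : y ∈ E ∪ r ⁻¹' E
    · exact Or.inr h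
    · exact Or.inl ⟨hy, h⟩
  have hvol : volume C ≤ volume C' + 2 * volume E := by
    calc volume C ≤ volume (C' ∪ (E ∪ r ⁻¹' E)) := measure_mono hsub
      _ ≤ volume C' + volume (E ∪ r ⁻¹' E) := measure_union_le _ _
      _ ≤ volume C' + (volume E + volume (r ⁻¹' E)) := by
          gcongr; exact measure_union_le _ _
      _ = volume C' + 2 * volume E := by rw [hpre]; ring
  have hC'fin : volume C' ≠ ⊤ := vol_ne_top ((hC'A.trans hAB).trans hB)
  have hEfin : volume E ≠ ⊤ := vol_ne_top ((Set.diff_subset).trans hB)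
  have hfin : volume C' + 2 * volume E ≠ ⊤ := by
    simp [ENNReal.add_eq_top, ENNReal.mul_eq_top, hC'fin, hEfin]
  have := ENNReal.toReal_mono hfin hvol
  rw [ENNReal.toReal_add hC'fin (by simp [ENNReal.mul_eq_top, hEfin]),
    ENNReal.toReal_mul] at this
  simp only [ENNReal.toReal_ofNat] at this
  linarith

/-- Exact intermediate-measure subsets of subsets of `[0,1)`. -/
lemma exists_subset_vol {A : Set ℝ} (hA : A ⊆ Set.Ico (0:ℝ) 1) (hAm : MeasurableSet A)
    {r : ℝ} (h0 : 0 ≤ r) (hr : ENNReal.ofReal r ≤ volume A) :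
    ∃ t, t ⊆ A ∧ MeasurableSet t ∧ volume t = ENNReal.ofReal r := by
  set f : ℝ → ℝ := fun s => (volume (A ∩ Set.Iio s)).toReal with hf
  have hfin : ∀ s : ℝ, volume (A ∩ Set.Iio s) ≠ ⊤ :=
    fun s => vol_ne_top ((Set.inter_subset_left).trans hA)
  have key : ∀ a b : ℝ, a ≤ b → f b ≤ f a + (b - a) := by
    intro a b hab
    have hsub : A ∩ Set.Iio b ⊆ (A ∩ Set.Iio a) ∪ Set.Ico a b := by
      rintro y ⟨hyA, hyb⟩
      by_cases h : y < a
      · exact Or.inl ⟨hyA, h⟩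
      · exact Or.inr ⟨not_lt.1 h, hyb⟩
    have hv : volume (A ∩ Set.Iio b) ≤ volume (A ∩ Set.Iio a) + ENNReal.ofReal (b - a) := by
      calc volume (A ∩ Set.Iio b) ≤ volume ((A ∩ Set.Iio a) ∪ Set.Ico a b) := measure_mono hsub
        _ ≤ volume (A ∩ Set.Iio a) + volume (Set.Ico a b) := measure_union_le _ _
        _ = volume (A ∩ Set.Iio a) + ENNReal.ofReal (b - a) := by rw [Real.volume_Ico]
    have hfin2 : volume (A ∩ Set.Iio a) + ENNReal.ofReal (b - a) ≠ ⊤ := by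
      simp [ENNReal.add_eq_top, hfin a]
    have := ENNReal.toReal_mono hfin2 hv
    rw [ENNReal.toReal_add (hfin a) (by simp), ENNReal.toReal_ofReal (by linarith)] at this
    exact this
  have hmono : Monotone f := by
    intro a b hab
    exact ENNReal.toReal_mono (hfin b) (measure_mono (Set.inter_subset_inter_right _
      (Set.Iio_subset_Iio hab)))
  have hcont : Continuous f := by
    refine (LipschitzWith.of_dist_le_mul (K := 1) fun a b => ?_).continuous
    rcases le_total a b with h | h
    · rw [Real.dist_eq, Real.dist_eq, abs_of_nonpos (by linarith [hmono h]),
        abs_of_nonpos (by linarith)]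
      have := key a b h
      push_cast
      linarith
    · rw [Real.dist_eq, Real.dist_eq, abs_of_nonneg (by linarith [hmono h]),
        abs_of_nonneg (by linarith)]
      have := key b a h
      push_cast
      linarith
  have hf0 : f 0 = 0 := by
    have : A ∩ Set.Iio 0 = ∅ := by
      ext y
      simp only [Set.mem_inter_iff, Set.mem_Iio, Set.mem_empty_iff_false, iff_false, not_and,
        not_lt]
      exact fun hy => (hA hy).1
    simp [hf, this]
  have hf1 : f 1 = (volume A).toReal := by
    have : A ∩ Set.Iio 1 = A := by
      refine Set.inter_eq_self_of_subset_left fun y hy => (hA hy).2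
    simp [hf, this]
  have hrIcc : r ∈ Set.Icc (f 0) (f 1) := by
    constructor
    · rw [hf0]; exact h0
    · rw [hf1]
      have := ENNReal.toReal_mono (vol_ne_top hA) hr
      rwa [ENNReal.toReal_ofReal h0] at this
  obtain ⟨s, -, hs⟩ := intermediate_value_Icc (by norm_num : (0:ℝ) ≤ 1)
    hcont.continuousOn hrIcc
  refine ⟨A ∩ Set.Iio s, Set.inter_subset_left, hAm.inter measurableSet_Iio, ?_⟩
  have : (volume (A ∩ Set.Iio s)).toReal = r := hs
  rw [← this, ENNReal.ofReal_toReal (hfin s)]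

/-- The defining set of `Δ`. -/
def Dset (ε : ℝ) : Set ℝ :=
  {d : ℝ | ∃ A : Set ℝ, A ⊆ Set.Ico (0:ℝ) 1 ∧ MeasurableSet A ∧
    volume A = ENNReal.ofReal ε ∧ d = DD A}

lemma Δ_eq (ε : ℝ) : Δ ε = sInf (Dset ε) := rfl

lemma Dset_nonempty {ε : ℝ} (h0 : 0 ≤ ε) (h1 : ε ≤ 1) : (Dset ε).Nonempty := by
  refine ⟨DD (Set.Ico 0 ε), Set.Ico 0 ε, ?_, measurableSet_Ico, by rw [Real.volume_Ico]; simp,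
    rfl⟩
  exact Set.Ico_subset_Ico le_rfl h1

lemma Dset_bddBelow (ε : ℝ) : BddBelow (Dset ε) := by
  refine ⟨0, ?_⟩
  rintro d ⟨A, hA, -, -, rfl⟩
  exact DD_nonneg hA

lemma delta_mono {x y : ℝ} (hx : 0 ≤ x) (hxy : x ≤ y) (hy : y ≤ 1) : Δ x ≤ Δ y := by
  rw [Δ_eq, Δ_eq]
  apply le_csInf (Dset_nonempty (hx.trans hxy) hy)
  rintro d ⟨A, hA, hAm, hAv, rfl⟩
  obtain ⟨t, htA, htm, htv⟩ := exists_subset_vol hA hAm hx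
    (by rw [hAv]; exact ENNReal.ofReal_le_ofReal hxy)
  calc sInf (Dset x) ≤ DD t := csInf_le (Dset_bddBelow x) ⟨t, htA.trans hA, htm, htv, rfl⟩
    _ ≤ DD A := DD_mono htA hA

lemma delta_le_add {x y : ℝ} (hx : 0 ≤ x) (hxy : x ≤ y) (hy : y ≤ 1) :
    Δ y ≤ Δ x + 2 * (y - x) := by
  rw [Δ_eq, Δ_eq, ← sub_le_iff_le_add]
  apply le_csInf (Dset_nonempty hx (hxy.trans hy))
  rintro d ⟨A, hA, hAm, hAv, rfl⟩
  rw [sub_le_iff_le_add]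
  -- find F ⊆ [0,1) \ A with measure y - x
  have hDm : MeasurableSet (Set.Ico (0:ℝ) 1 \ A) := measurableSet_Ico.diff hAm
  have hvd : ENNReal.ofReal (y - x) ≤ volume (Set.Ico (0:ℝ) 1 \ A) := by
    have hadd : volume (Set.Ico (0:ℝ) 1 \ A) + volume A = volume (Set.Ico (0:ℝ) 1) := by
      have := measure_diff_add_inter (Set.Ico (0:ℝ) 1) hAm (μ := volume)
      rwa [Set.inter_eq_self_of_subset_right hA] at this
    rw [Real.volume_Ico, hAv] at hadd
    have h1 : ENNReal.ofReal (y - x) + ENNReal.ofReal x ≤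
        volume (Set.Ico (0:ℝ) 1 \ A) + ENNReal.ofReal x := by
      rw [hadd, ← ENNReal.ofReal_add (by linarith) hx]
      refine ENNReal.ofReal_le_ofReal ?_
      linarith
    exact (ENNReal.add_le_add_iff_right (by simp)).1 h1
  obtain ⟨F, hF, hFm, hFv⟩ := exists_subset_vol (Set.diff_subset) hDm (by linarith) hvd
  set B : Set ℝ := A ∪ F with hB
  have hBsub : B ⊆ Set.Ico (0:ℝ) 1 := Set.union_subset hA (hF.trans Set.diff_subset)
  have hBm : MeasurableSet B := hAm.union hFm
  have hdisj : Disjoint A F := by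
    refine Set.disjoint_left.2 fun z hz hzF => ?_
    exact (hF hzF).2 hz
  have hBv : volume B = ENNReal.ofReal y := by
    rw [hB, measure_union hdisj hFm, hAv, hFv, ← ENNReal.ofReal_add hx (by linarith)]
    congr 1
    ring
  have hBA : B \ A = F := by
    rw [hB, Set.union_diff_left]
    ext z
    constructor
    · rintro ⟨hz, -⟩; exact hz
    · intro hz; exact ⟨hz, (hF hz).2⟩
  have hBAv : (volume (B \ A)).toReal = y - x := by
    rw [hBA, hFv, ENNReal.toReal_ofReal (by linarith)]
  calc sInf (Dset y) ≤ DD B := csInf_le (Dset_bddBelow y) ⟨B, hBsub, hBm, hBv, rfl⟩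
    _ ≤ DD A + 2 * (volume (B \ A)).toReal := DD_le_add Set.subset_union_left hBsub hAm hBm
    _ = DD A + 2 * (y - x) := by rw [hBAv]

lemma abs_bound {x y : ℝ} (hx : x ∈ Set.Ioc (0:ℝ) 1) (hy : y ∈ Set.Ioc (0:ℝ) 1) :
    |Δ x - Δ y| ≤ 2 * |x - y| := by
  rcases le_total x y with h | h
  · have h1 := delta_mono hx.1.le h hy.2
    have h2 := delta_le_add hx.1.le h hy.2
    rw [abs_of_nonpos (by linarith), abs_of_nonpos (by linarith)]
    linarith
  · have h1 := delta_mono hy.1.le h hx.2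
    have h2 := delta_le_add hy.1.le h hx.2
    rw [abs_of_nonneg (by linarith), abs_of_nonneg (by linarith)]
    linarith

end DeltaLip

theorem delta_lipschitz :
    (∀ x y : ℝ, x ∈ Set.Ioc (0:ℝ) 1 → y ∈ Set.Ioc (0:ℝ) 1 → |Δ x - Δ y| ≤ 2 * |x - y|) ∧
    ContinuousOn Δ (Set.Ioc (0:ℝ) 1) := by
  constructor
  · exact fun x y hx hy => DeltaLip.abs_bound hx hy
  · refine (LipschitzOnWith.of_dist_le_mul (K := 2) fun x hx y hy => ?_).continuousOn
    rw [Real.dist_eq, Real.dist_eq]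
    have := DeltaLip.abs_bound hx hy
    push_cast
    linarith
end

section
/- Let K be a continuous function on the circle 𝕋 satisfying K(x) ≥ 1 for all x ∈ [−1/4, 1/4], and let f be a pdf supported on [−1/4, 1/4]. Then ‖f∗f‖_∞ ≥ ‖f∗f‖₂² ≥ ‖K̂‖_{4/3}^{−4}. -/
open MeasureTheory
/-- Convolution of two functions on the circle `𝕋 = ℝ/ℤ` (with its Haar measure). -/
noncomputable def conv (f g : UnitAddCircle → ℝ) (c : UnitAddCircle) : ℝ := ∫ x, f x * g (c - x)

/-- A pdf on the circle: a nonnegative function in `L²` with integral 1. -/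
def IsPdf (f : UnitAddCircle → ℝ) : Prop :=
  (∀ x, 0 ≤ f x) ∧ MeasureTheory.MemLp f 2 volume ∧ (∫ x, f x) = 1

/-- The function `f` on the circle is supported on (the image of) `[-1/4, 1/4]`. -/
def SuppIn (f : UnitAddCircle → ℝ) : Prop :=
  ∀ x : UnitAddCircle, f x ≠ 0 → ∃ r : ℝ, |r| ≤ 1/4 ∧ (r : UnitAddCircle) = x

/-- The essential supremum (`L^∞` norm) of a function on the circle. -/
noncomputable def normInf (h : UnitAddCircle → ℝ) : ℝ := (eLpNorm h ⊤ volume).toReal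

/-- The square of the `L²` norm of a function on the circle. -/
noncomputable def norm2sq (h : UnitAddCircle → ℝ) : ℝ := ∫ x, (h x)^2

/-- The `j`-th Fourier coefficient of a real function on the circle. -/
noncomputable def fc (f : UnitAddCircle → ℝ) (j : ℤ) : ℂ := fourierCoeff (fun x => (f x : ℂ)) j

/-- The `ℓ^{4/3}` norm of the Fourier coefficient sequence of `K`. -/
noncomputable def khat43 (K : UnitAddCircle → ℝ) : ℝ :=
  (∑' j : ℤ, ‖fc K j‖ ^ ((4:ℝ)/3)) ^ ((3:ℝ)/4)

/-!
Write `F = f ∗ f`, so that `F̂(j) = f̂(j)²`. As `F ≥ 0` and `∫ F = 1`,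
`‖F‖₂² = ∫ F · F ≤ ‖F‖_∞`. For the lower bound, `K ≥ 1` on the support of `f` gives
`1 ≤ ∫ K f = ∑ⱼ conj K̂(j) f̂(j)` by Parseval, and Hölder with exponents `4` and `4/3` bounds
the sum by `(∑ⱼ |f̂(j)|⁴)^{1/4} ‖K̂‖_{4/3} = ‖F‖₂^{1/2} ‖K̂‖_{4/3}`.
-/

open AddCircle ComplexConjugate
open scoped ENNReal

lemma UnitAddCircle.volume_eq_haarAddCircle :
    (volume : Measure UnitAddCircle) = haarAddCircle := by
  simp [volume_eq_smul_haarAddCircle]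

instance : IsProbabilityMeasure (volume : Measure UnitAddCircle) := by
  rw [UnitAddCircle.volume_eq_haarAddCircle]; infer_instance

lemma fourier_add_apply (n : ℤ) (x y : UnitAddCircle) :
    fourier n (x + y) = fourier n x * fourier n y := by
  simp only [fourier_apply, smul_add, toCircle_add, Circle.coe_mul]

lemma fc_eq_integral (g : UnitAddCircle → ℝ) (j : ℤ) :
    fc g j = ∫ t, fourier (-j) t * (g t : ℂ) := by
  simp [fc, fourierCoeff, UnitAddCircle.volume_eq_haarAddCircle]

lemma fc_eq_fourierCoeff_toLp {g : UnitAddCircle → ℝ} (hg : MemLp g 2 volume) (j : ℤ) :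
    fc g j = fourierCoeff hg.ofReal.haarAddCircle.toLp j :=
  congrFun (fourierCoeff_congr_ae hg.ofReal.haarAddCircle.coeFn_toLp).symm j

lemma hasSum_sq_norm_fc {g : UnitAddCircle → ℝ} (hg : MemLp g 2 volume) :
    HasSum (fun j => ‖fc g j‖ ^ 2) (norm2sq g) := by
  have hgL := hg.ofReal.haarAddCircle
  convert hasSum_sq_fourierCoeff hgL.toLp using 1
  · simp only [fc_eq_fourierCoeff_toLp hg]
  · rw [integral_congr_ae (hgL.coeFn_toLp.mono fun x hx => by rw [hx]),
      ← UnitAddCircle.volume_eq_haarAddCircle]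
    simp [norm2sq]

lemma hasSum_conj_fc_mul_fc {k g : UnitAddCircle → ℝ} (hk : MemLp k 2 volume)
    (hg : MemLp g 2 volume) :
    HasSum (fun j => conj (fc k j) * fc g j) ((∫ x, k x * g x : ℝ) : ℂ) := by
  have hkL := hk.ofReal.haarAddCircle
  have hgL := hg.ofReal.haarAddCircle
  have hcoef : ∀ j, inner ℂ hkL.toLp (fourierBasis j) * inner ℂ (fourierBasis j) hgL.toLp
      = conj (fc k j) * fc g j := fun j => by
    rw [← inner_conj_symm, ← fourierBasis.repr_apply_apply, ← fourierBasis.repr_apply_apply,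
      fourierBasis_repr, fourierBasis_repr, fc_eq_fourierCoeff_toLp hk,
      fc_eq_fourierCoeff_toLp hg]
  have hinner : inner ℂ hkL.toLp hgL.toLp = ((∫ x, k x * g x : ℝ) : ℂ) := by
    rw [L2.inner_def, integral_congr_ae (hkL.coeFn_toLp.mp (hgL.coeFn_toLp.mono
      fun x hgx hkx => by rw [hgx, hkx])), ← UnitAddCircle.volume_eq_haarAddCircle,
      ← integral_complex_ofReal]
    simp [mul_comm]
  simpa only [hcoef, hinner] using fourierBasis.hasSum_inner_mul_inner hkL.toLp hgL.toLp

section Convolution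

variable {f g : UnitAddCircle → ℝ}

lemma integrable_conv (hf : Integrable f volume) (hg : Integrable g volume) :
    Integrable (conv f g) volume :=
  hf.integrable_convolution (ContinuousLinearMap.mul ℝ ℝ) hg

lemma integral_conv_eq_integral_mul_integral (hf : Integrable f volume)
    (hg : Integrable g volume) :
    ∫ c, conv f g c = (∫ x, f x) * ∫ x, g x :=
  integral_convolution (ContinuousLinearMap.mul ℝ ℝ) hf hg

lemma conv_nonneg (hf : ∀ x, 0 ≤ f x) (hg : ∀ x, 0 ≤ g x) (c : UnitAddCircle) :
    0 ≤ conv f g c :=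
  integral_nonneg fun x => mul_nonneg (hf x) (hg _)

lemma fc_conv (hf : Integrable f volume) (hg : Integrable g volume) (j : ℤ) :
    fc (conv f g) j = fc f j * fc g j := by
  set e : UnitAddCircle → ℂ := ⇑(fourier (T := 1) (-j))
  have he : ∀ {h : UnitAddCircle → ℝ}, Integrable h volume →
      Integrable (fun x => e x * (h x : ℂ)) volume := fun hh =>
    hh.ofReal.bdd_mul (c := 1) (fourier (-j)).continuous.aestronglyMeasurable
      (ae_of_all _ fun x => by simp [e, Circle.norm_coe])
  -- `e` is a character, so it distributes over the convolution integrand.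
  have hpoint : ∀ t, e t * (conv f g t : ℂ) = convolution (fun x => e x * f x)
      (fun x => e x * g x) (ContinuousLinearMap.mul ℂ ℂ) volume t := by
    intro t
    rw [conv, ← integral_complex_ofReal, ← integral_const_mul, convolution_def]
    congr 1 with x
    rw [show e t = e x * e (t - x) by rw [← fourier_add_apply, add_sub_cancel],
      ContinuousLinearMap.mul_apply']
    push_cast
    ring
  simp only [fc_eq_integral]
  rw [integral_congr_ae (ae_of_all _ hpoint),
    integral_convolution (ContinuousLinearMap.mul ℂ ℂ) (he hf) (he hg)]
  rfl

lemma abs_conv_self_le (hf : MemLp f 2 volume) (c : UnitAddCircle) :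
    |conv f f c| ≤ ∫ x, f x ^ 2 := by
  have hsq : Integrable (fun x => f x ^ 2) volume := hf.integrable_sq
  have hsq' : Integrable (fun x => f (c - x) ^ 2) volume := hsq.comp_sub_left c
  have hamgm : ∀ x, ‖f x * f (c - x)‖ ≤ (f x ^ 2 + f (c - x) ^ 2) / 2 := fun x => by
    have := two_mul_le_add_sq |f x| |f (c - x)|
    rw [sq_abs, sq_abs] at this
    rw [Real.norm_eq_abs, abs_mul]
    linarith
  have hbound : ‖∫ x, f x * f (c - x)‖ ≤ ∫ x, (f x ^ 2 + f (c - x) ^ 2) / 2 :=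
    norm_integral_le_of_norm_le ((hsq.add hsq').div_const 2) (ae_of_all _ hamgm)
  have hmean : ∫ x, (f x ^ 2 + f (c - x) ^ 2) / 2 = ∫ x, f x ^ 2 := by
    rw [integral_div, integral_add hsq hsq',
      integral_sub_left_eq_self (fun x => f x ^ 2) volume c]
    ring
  exact hbound.trans hmean.le

lemma memLp_conv_self (hf : MemLp f 2 volume) (p : ℝ≥0∞) : MemLp (conv f f) p volume :=
  have hfi := hf.integrable one_le_two
  MemLp.of_bound (integrable_conv hfi hfi).aestronglyMeasurable _
    (ae_of_all _ (abs_conv_self_le hf))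

lemma hasSum_norm_fc_rpow_four (hf : MemLp f 2 volume) :
    HasSum (fun j => ‖fc f j‖ ^ (4 : ℝ)) (norm2sq (conv f f)) := by
  have hfi := hf.integrable one_le_two
  convert hasSum_sq_norm_fc (memLp_conv_self hf 2) using 2 with j
  rw [fc_conv hfi hfi, norm_mul, ← sq, ← pow_mul]
  norm_num

end Convolution

lemma integral_sq_le_toReal_eLpNorm_top_mul_integral {α : Type*} [MeasurableSpace α]
    {μ : Measure α} {F : α → ℝ} (hF0 : 0 ≤ᵐ[μ] F) (hFi : Integrable F μ) (hF : MemLp F ⊤ μ) :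
    ∫ x, F x ^ 2 ∂μ ≤ (eLpNorm F ⊤ μ).toReal * ∫ x, F x ∂μ := by
  rw [← integral_const_mul]
  refine integral_mono_of_nonneg (ae_of_all _ fun x => sq_nonneg _) (hFi.const_mul _) ?_
  filter_upwards [hF0, toReal_eLpNorm hF.aestronglyMeasurable ▸ ae_le_lpNorm_exponent_top hF]
    with x h0 hle
  rw [Real.norm_eq_abs, abs_of_nonneg h0] at hle
  rw [sq]
  exact mul_le_mul_of_nonneg_right hle h0

lemma one_le_integral_mul_of_suppIn {K f : UnitAddCircle → ℝ}
    (hK1 : ∀ r : ℝ, |r| ≤ 1/4 → 1 ≤ K (r : UnitAddCircle)) (hf0 : ∀ x, 0 ≤ f x)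
    (hfi : Integrable f volume) (hf1 : ∫ x, f x = 1) (hsupp : SuppIn f)
    (hKf : Integrable (fun x => K x * f x) volume) :
    1 ≤ ∫ x, K x * f x := by
  refine hf1.ge.trans (integral_mono hfi hKf fun x => ?_)
  by_cases hx : f x = 0
  · simp [hx]
  · obtain ⟨r, hr, rfl⟩ := hsupp x hx
    exact le_mul_of_one_le_left (hf0 _) (hK1 r hr)

lemma integral_mul_le_tsum_norm_fc_mul {k g : UnitAddCircle → ℝ} (hk : MemLp k 2 volume)
    (hg : MemLp g 2 volume) (hsum : Summable fun j => ‖fc g j‖ * ‖fc k j‖) :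
    ∫ x, k x * g x ≤ ∑' j, ‖fc g j‖ * ‖fc k j‖ := by
  refine (le_abs_self _).trans ?_
  rw [← Real.norm_eq_abs, ← Complex.norm_real]
  refine (hasSum_conj_fc_mul_fc hk hg).norm_le_of_bounded hsum.hasSum fun j => ?_
  rw [norm_mul, RCLike.norm_conj, mul_comm]

lemma inv_pow_four_le_of_one_le_rpow_mul {A B : ℝ} (hA : 0 ≤ A)
    (h : 1 ≤ A ^ (1 / 4 : ℝ) * B) : B⁻¹ ^ 4 ≤ A := by
  set a := A ^ (1 / 4 : ℝ)
  have ha : 0 ≤ a := Real.rpow_nonneg hA _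
  have hB : 0 < B := pos_of_mul_pos_right (one_pos.trans_le h) ha
  calc B⁻¹ ^ 4 ≤ a ^ 4 := pow_le_pow_left₀ (inv_nonneg.mpr hB.le)
        ((inv_le_iff_one_le_mul₀ hB).mpr h) 4
    _ = A := by rw [← Real.rpow_natCast, ← Real.rpow_mul hA]; norm_num

lemma inv_khat43_pow_four_le_norm2sq_conv {K f : UnitAddCircle → ℝ} (hK : MemLp K 2 volume)
    (hK1 : ∀ r : ℝ, |r| ≤ 1/4 → 1 ≤ K (r : UnitAddCircle)) (hf : IsPdf f) (hsupp : SuppIn f) :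
    (khat43 K)⁻¹ ^ 4 ≤ norm2sq (conv f f) := by
  obtain ⟨hf0, hf2, hf1⟩ := hf
  have hA : 0 ≤ norm2sq (conv f f) := integral_nonneg fun c => sq_nonneg _
  by_cases hsK : Summable fun j => ‖fc K j‖ ^ ((4 : ℝ) / 3)
  swap
  · simpa [khat43, tsum_eq_zero_of_not_summable hsK] using hA
  have hfourth := hasSum_norm_fc_rpow_four hf2
  obtain ⟨hsum, hHolder⟩ := Real.summable_and_inner_le_Lp_mul_Lq_tsum_of_nonneg
    (Real.holderConjugate_iff.mpr ⟨by norm_num, by norm_num⟩)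
    (fun j => norm_nonneg (fc f j)) (fun j => norm_nonneg (fc K j)) hfourth.summable hsK
  refine inv_pow_four_le_of_one_le_rpow_mul hA ?_
  calc 1 ≤ ∫ x, K x * f x := one_le_integral_mul_of_suppIn hK1 hf0
        (hf2.integrable one_le_two) hf1 hsupp (hK.integrable_mul hf2)
    _ ≤ ∑' j, ‖fc f j‖ * ‖fc K j‖ := integral_mul_le_tsum_norm_fc_mul hK hf2 hsum
    _ ≤ _ := hHolder
    _ = _ := by rw [hfourth.tsum_eq, khat43]; norm_num

lemma norm2sq_conv_le_normInf {f : UnitAddCircle → ℝ} (hf : IsPdf f) :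
    norm2sq (conv f f) ≤ normInf (conv f f) := by
  obtain ⟨hf0, hf2, hf1⟩ := hf
  have hfi := hf2.integrable one_le_two
  calc norm2sq (conv f f) ≤ normInf (conv f f) * ∫ c, conv f f c :=
        integral_sq_le_toReal_eLpNorm_top_mul_integral (ae_of_all _ (conv_nonneg hf0 hf0))
          (integrable_conv hfi hfi) (memLp_conv_self hf2 ⊤)
    _ = normInf (conv f f) := by
      rw [integral_conv_eq_integral_mul_integral hfi hfi, hf1, one_mul, mul_one]

theorem basic_kernel_bound (K : UnitAddCircle → ℝ) (hKcont : Continuous K)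
    (hK1 : ∀ r : ℝ, |r| ≤ 1/4 → 1 ≤ K (r : UnitAddCircle))
    (f : UnitAddCircle → ℝ) (hf : IsPdf f) (hsupp : SuppIn f) :
    (khat43 K)⁻¹ ^ 4 ≤ norm2sq (conv f f) ∧ norm2sq (conv f f) ≤ normInf (conv f f) :=
  ⟨inv_khat43_pow_four_le_norm2sq_conv (ContinuousMap.memLp (μ := volume) ℝ ⟨K, hKcont⟩) hK1 hf
    hsupp, norm2sq_conv_le_normInf hf⟩
end

section
/- Let f be a pdf supported on [−1/4, 1/4]. Then 2(Re f̂(1))² − 1 ≤ Re f̂(2) ≤ 2 Re f̂(1) − 1. -/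
open MeasureTheory
/-!
Write `c x = cos (2π x)`. Then `Re f̂(1) = ∫ c f` and, since `cos (4π x) = 2 c x ^ 2 - 1`,
`Re f̂(2) = 2 ∫ c² f - 1`. As `f` is a probability density, Jensen gives `(∫ c f)² ≤ ∫ c² f`;
on `[-1/4, 1/4]` we have `0 ≤ c ≤ 1`, so `c² ≤ c` on the support of `f` and `∫ c² f ≤ ∫ c f`.
-/

open Real

section WeightedIntegral

variable {α : Type*} [MeasurableSpace α] {μ : Measure α} {f g : α → ℝ}

theorem sq_integral_mul_le_integral_sq_mul (hf₀ : ∀ x, 0 ≤ f x) (hf : Integrable f μ)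
    (hf₁ : ∫ x, f x ∂μ = 1) (hgf : Integrable (fun x => g x * f x) μ)
    (hg₂f : Integrable (fun x => g x ^ 2 * f x) μ) :
    (∫ x, g x * f x ∂μ) ^ 2 ≤ ∫ x, g x ^ 2 * f x ∂μ := by
  set a := ∫ x, g x * f x ∂μ
  have hpointwise : ∀ x, 2 * a * (g x * f x) - a ^ 2 * f x ≤ g x ^ 2 * f x := fun x => by
    nlinarith [mul_nonneg (hf₀ x) (sq_nonneg (g x - a))]
  calc a ^ 2 = ∫ x, (2 * a * (g x * f x) - a ^ 2 * f x) ∂μ := by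
        rw [integral_sub (hgf.const_mul _) (hf.const_mul _), integral_const_mul,
          integral_const_mul, hf₁]
        ring
    _ ≤ ∫ x, g x ^ 2 * f x ∂μ :=
        integral_mono ((hgf.const_mul _).sub (hf.const_mul _)) hg₂f hpointwise

theorem integral_sq_mul_le_integral_mul (hf₀ : ∀ x, 0 ≤ f x)
    (hg : ∀ x, f x ≠ 0 → 0 ≤ g x ∧ g x ≤ 1) (hgf : Integrable (fun x => g x * f x) μ)
    (hg₂f : Integrable (fun x => g x ^ 2 * f x) μ) :
    ∫ x, g x ^ 2 * f x ∂μ ≤ ∫ x, g x * f x ∂μ := by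
  refine integral_mono hg₂f hgf fun x => ?_
  rcases eq_or_ne (f x) 0 with hx | hx
  · simp [hx]
  · obtain ⟨hg₀, hg₁⟩ := hg x hx
    nlinarith [mul_nonneg (hf₀ x) (mul_nonneg hg₀ (sub_nonneg.2 hg₁))]

end WeightedIntegral

noncomputable def circleCos (j : ℤ) (x : UnitAddCircle) : ℝ := (fourier j x).re

theorem circleCos_coe (j : ℤ) (r : ℝ) : circleCos j r = Real.cos (2 * π * j * r) := by
  rw [circleCos, fourier_coe_apply, ← Complex.exp_ofReal_mul_I_re]
  congr 2
  push_cast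
  ring

theorem circleCos_neg (j : ℤ) (x : UnitAddCircle) : circleCos (-j) x = circleCos j x := by
  rw [circleCos, fourier_neg, Complex.conj_re, circleCos]

theorem circleCos_two (x : UnitAddCircle) : circleCos 2 x = 2 * circleCos 1 x ^ 2 - 1 := by
  induction x using QuotientAddGroup.induction_on with
  | H r =>
    rw [circleCos_coe, circleCos_coe, ← Real.cos_two_mul]
    push_cast
    ring_nf

theorem abs_circleCos_le_one (j : ℤ) (x : UnitAddCircle) : |circleCos j x| ≤ 1 := by
  refine (Complex.abs_re_le_norm _).trans ?_
  rw [fourier_apply, Circle.norm_coe]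

theorem continuous_circleCos (j : ℤ) : Continuous (circleCos j) :=
  Complex.continuous_re.comp (fourier j).continuous

theorem circleCos_one_nonneg {r : ℝ} (hr : |r| ≤ 1 / 4) : 0 ≤ circleCos 1 r := by
  rw [abs_le] at hr
  rw [circleCos_coe]
  apply Real.cos_nonneg_of_mem_Icc
  constructor <;> push_cast <;> nlinarith [Real.pi_pos]

theorem MeasureTheory.Integrable.circleCos_mul {f : UnitAddCircle → ℝ} (hf : Integrable f)
    (j : ℤ) : Integrable (fun x => circleCos j x * f x) :=
  hf.bdd_mul (continuous_circleCos j).aestronglyMeasurable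
    (Filter.Eventually.of_forall (abs_circleCos_le_one j))

theorem MeasureTheory.Integrable.circleCos_sq_mul {f : UnitAddCircle → ℝ} (hf : Integrable f)
    (j : ℤ) : Integrable (fun x => circleCos j x ^ 2 * f x) := by
  simpa only [sq, mul_assoc] using (hf.circleCos_mul j).circleCos_mul j

theorem fc_re_eq_integral {f : UnitAddCircle → ℝ} (hf : Integrable f) (j : ℤ) :
    (fc f j).re = ∫ x, circleCos j x * f x := by
  have hhaar : (AddCircle.haarAddCircle : Measure UnitAddCircle) = volume := by
    simp [AddCircle.volume_eq_smul_haarAddCircle]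
  have hint : Integrable (fun x => fourier (-j) x • (f x : ℂ)) := by
    rw [← hhaar]
    exact (hhaar ▸ hf.ofReal).fourier_smul (-j)
  rw [fc, fourierCoeff, hhaar, ← RCLike.re_to_complex, ← integral_re hint]
  congr 1
  ext x
  rw [smul_eq_mul, RCLike.re_to_complex, Complex.re_mul_ofReal, ← circleCos_neg j x, circleCos]

theorem fc_two_re {f : UnitAddCircle → ℝ} (hf : Integrable f) (hf₁ : ∫ x, f x = 1) :
    (fc f 2).re = 2 * (∫ x, circleCos 1 x ^ 2 * f x) - 1 := by
  calc (fc f 2).re = ∫ x, (2 * (circleCos 1 x ^ 2 * f x) - f x) := by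
        rw [fc_re_eq_integral hf]
        congr 1 with x
        rw [circleCos_two]
        ring
    _ = 2 * (∫ x, circleCos 1 x ^ 2 * f x) - 1 := by
        rw [integral_sub ((hf.circleCos_sq_mul 1).const_mul 2) hf, integral_const_mul, hf₁]

theorem fhat_f1_f2_domain (f : UnitAddCircle → ℝ) (hf : IsPdf f) (hsupp : SuppIn f) :
    2 * (fc f 1).re ^ 2 - 1 ≤ (fc f 2).re ∧ (fc f 2).re ≤ 2 * (fc f 1).re - 1 := by
  obtain ⟨hf₀, hL2, hf₁⟩ := hf
  have hf : Integrable f := hL2.integrable one_le_two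
  have hcos_mem : ∀ x, f x ≠ 0 → 0 ≤ circleCos 1 x ∧ circleCos 1 x ≤ 1 := fun x hx => by
    obtain ⟨r, hr, rfl⟩ := hsupp x hx
    exact ⟨circleCos_one_nonneg hr, (le_abs_self _).trans (abs_circleCos_le_one 1 r)⟩
  have hcf := hf.circleCos_mul 1
  have hc₂f := hf.circleCos_sq_mul 1
  rw [fc_two_re hf hf₁, fc_re_eq_integral hf]
  constructor
  · linarith [sq_integral_mul_le_integral_sq_mul hf₀ hf hf₁ hcf hc₂f]
  · linarith [integral_sq_mul_le_integral_mul hf₀ hcos_mem hcf hc₂f]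
end

section
/- For any integers n ≥ g ≥ 1, Δ(R(g,n)/n) ≤ g/n. -/
open MeasureTheory

/-- `S` is a B*[g] set: for every `m` there are at most `g` ordered pairs in `S × S`
summing to `m`. -/
def IsBStar (g : ℕ) (S : Finset ℤ) : Prop :=
  ∀ m : ℤ, ((S ×ˢ S).filter (fun p => p.1 + p.2 = m)).card ≤ g

/-- `R g n` is the largest cardinality of a B*[g] set contained in `{1, …, n}`. -/
noncomputable def R (g n : ℕ) : ℕ :=
  sSup {k : ℕ | ∃ S : Finset ℤ, S ⊆ Finset.Icc 1 (n : ℤ) ∧ IsBStar g S ∧ S.card = k}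

/-!
Take a B*[g] set `S ⊆ {1, …, n}` of size `R g n` and let `A` be the union of the cells
`[(s - 1)/n, s/n)`, `s ∈ S`; it has measure `R g n / n`. If `C ⊆ A` is symmetric about `c`,
put `u = 2c` and `M = ⌊u n⌋`. A point `x` of `C` lies in a cell `s` with `u - x` in a cell `t`,
and then `s + t ∈ {M + 1, M + 2}`. For `s + t = M + 1` the points `x` of cell `s` reflecting
into cell `t` fill an interval of length at most `(M + 1)/n - u`, for `s + t = M + 2` one of
length at most `u - M/n`. The B*[g] property leaves at most `g` pairs `(s, t)` of each kind,
so `λ(C) ≤ g ((M + 1)/n - u) + g (u - M/n) = g/n`.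
-/

def gridCell (n : ℕ) (s : ℤ) : Set ℝ := Set.Ico (((s : ℝ) - 1) / n) (s / n)

def gridSet (n : ℕ) (S : Finset ℤ) : Set ℝ := ⋃ s ∈ S, gridCell n s

def reflectPiece (n : ℕ) (u : ℝ) (p : ℤ × ℤ) : Set ℝ :=
  gridCell n p.1 ∩ (u - ·) ⁻¹' gridCell n p.2

section Grid

variable {n : ℕ}

lemma floor_mul_eq_of_mem_gridCell {s : ℤ} {x : ℝ} (hx : x ∈ gridCell n s) :
    0 < n ∧ ⌊x * n⌋ = s - 1 := by
  obtain ⟨hlo, hhi⟩ := hx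
  have hn : 0 < n := Nat.pos_of_ne_zero <| by rintro rfl; simp at hlo hhi; linarith
  have hn' : (0 : ℝ) < n := by exact_mod_cast hn
  refine ⟨hn, Int.floor_eq_iff.mpr ⟨?_, ?_⟩⟩
  · push_cast; rwa [← div_le_iff₀ hn']
  · push_cast; rwa [sub_add_cancel, ← lt_div_iff₀ hn']

lemma pairwise_disjoint_gridCell (n : ℕ) : Pairwise (Function.onFun Disjoint (gridCell n)) := by
  intro s t hst
  refine Set.disjoint_left.mpr fun x hs ht => hst ?_
  have := (floor_mul_eq_of_mem_gridCell hs).2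
  have := (floor_mul_eq_of_mem_gridCell ht).2
  omega

lemma volume_gridCell (n : ℕ) (s : ℤ) : volume (gridCell n s) = ENNReal.ofReal (1 / n) := by
  rw [gridCell, Real.volume_Ico]
  ring_nf

lemma ofReal_natCast_div (k n : ℕ) :
    ENNReal.ofReal ((k : ℝ) / n) = k * ENNReal.ofReal (1 / n) := by
  rw [← ENNReal.ofReal_natCast, ← ENNReal.ofReal_mul (by positivity), mul_one_div]

lemma measurableSet_gridCell (n : ℕ) (s : ℤ) : MeasurableSet (gridCell n s) :=
  measurableSet_Ico

lemma measurableSet_gridSet (n : ℕ) (S : Finset ℤ) : MeasurableSet (gridSet n S) :=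
  S.measurableSet_biUnion fun s _ => measurableSet_gridCell n s

lemma volume_gridSet (n : ℕ) (S : Finset ℤ) :
    volume (gridSet n S) = ENNReal.ofReal ((S.card : ℝ) / n) := by
  rw [gridSet, measure_biUnion_finset ((pairwise_disjoint_gridCell n).set_pairwise _)
    fun s _ => measurableSet_gridCell n s]
  simp only [volume_gridCell, Finset.sum_const, nsmul_eq_mul, ofReal_natCast_div]

lemma gridSet_subset_Ico {S : Finset ℤ} (hS : S ⊆ Finset.Icc 1 (n : ℤ)) :
    gridSet n S ⊆ Set.Ico 0 1 := by
  intro x hx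
  obtain ⟨s, hsS, hlo, hhi⟩ := Set.mem_iUnion₂.mp hx
  obtain ⟨hs1, hsn⟩ := Finset.mem_Icc.mp (hS hsS)
  have hs1 : (1 : ℝ) ≤ s := by exact_mod_cast hs1
  have hsn : (s : ℝ) ≤ n := by exact_mod_cast hsn
  exact ⟨(div_nonneg (by linarith) n.cast_nonneg).trans hlo,
    hhi.trans_le (div_le_one_of_le₀ hsn n.cast_nonneg)⟩

lemma add_eq_floor_add_one_or_two {s t : ℤ} {u x : ℝ} (hx : x ∈ gridCell n s)
    (hux : u - x ∈ gridCell n t) : s + t = ⌊u * n⌋ + 1 ∨ s + t = ⌊u * n⌋ + 2 := by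
  have hs := (floor_mul_eq_of_mem_gridCell hx).2
  have ht := (floor_mul_eq_of_mem_gridCell hux).2
  have hsum : x * n + (u - x) * n = u * n := by ring
  have := Int.le_floor_add (x * n) ((u - x) * n)
  have := Int.le_floor_add_floor (x * n) ((u - x) * n)
  rw [hsum] at *
  omega

lemma volume_reflectPiece_le_left (s t : ℤ) (u : ℝ) :
    volume (reflectPiece n u (s, t)) ≤ ENNReal.ofReal ((s + t) / n - u) := by
  calc volume (reflectPiece n u (s, t))
      ≤ volume (Set.Ioo (u - t / n) (s / n)) :=
        measure_mono fun x ⟨hs, ht⟩ => ⟨by linarith [ht.2], hs.2⟩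
    _ = ENNReal.ofReal ((s + t) / n - u) := by rw [Real.volume_Ioo]; ring_nf

lemma volume_reflectPiece_le_right (s t : ℤ) (u : ℝ) :
    volume (reflectPiece n u (s, t)) ≤
      ENNReal.ofReal (u - (s + t - 2) / n) := by
  calc volume (reflectPiece n u (s, t))
      ≤ volume (Set.Icc (((s : ℝ) - 1) / n) (u - ((t : ℝ) - 1) / n)) :=
        measure_mono fun x ⟨hs, ht⟩ => ⟨hs.1, by linarith [ht.1]⟩
    _ = ENNReal.ofReal (u - (s + t - 2) / n) := by rw [Real.volume_Icc]; ring_nf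

lemma subset_union_biUnion_reflectPiece {S : Finset ℤ} {C : Set ℝ} {u : ℝ}
    (hC : C ⊆ gridSet n S) (hu : ∀ x ∈ C, u - x ∈ C) :
    C ⊆ (⋃ p ∈ (S ×ˢ S).filter (fun p => p.1 + p.2 = ⌊u * n⌋ + 1), reflectPiece n u p) ∪
      ⋃ p ∈ (S ×ˢ S).filter (fun p => p.1 + p.2 = ⌊u * n⌋ + 2), reflectPiece n u p := by
  intro x hx
  obtain ⟨s, hs, hxs⟩ := Set.mem_iUnion₂.mp (hC hx)
  obtain ⟨t, ht, hxt⟩ := Set.mem_iUnion₂.mp (hC (hu x hx))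
  have hmem k (hk : s + t = k) :
      x ∈ ⋃ p ∈ (S ×ˢ S).filter (fun p => p.1 + p.2 = k), reflectPiece n u p :=
    Set.mem_iUnion₂.mpr ⟨(s, t), Finset.mem_filter.mpr ⟨Finset.mk_mem_product hs ht, hk⟩,
      hxs, hxt⟩
  rcases add_eq_floor_add_one_or_two hxs hxt with hk | hk
  exacts [Or.inl (hmem _ hk), Or.inr (hmem _ hk)]

end Grid

lemma IsSymmetricSet.exists_sub_mem {C : Set ℝ} (h : IsSymmetricSet C) :
    ∃ u, ∀ x ∈ C, u - x ∈ C := by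
  obtain ⟨c, hc⟩ := h
  refine ⟨2 * c, fun x hx => ?_⟩
  have := (hc (x - c)).mp (by rwa [add_sub_cancel])
  rwa [show c - (x - c) = 2 * c - x by ring] at this

lemma IsBStar.measure_biUnion_le {α : Type*} [MeasurableSpace α] (μ : Measure α) {g : ℕ}
    {S : Finset ℤ} (hB : IsBStar g S) (k : ℤ) (f : ℤ × ℤ → Set α) {c : ENNReal}
    (hf : ∀ s t, s + t = k → μ (f (s, t)) ≤ c) :
    μ (⋃ p ∈ (S ×ˢ S).filter (fun p => p.1 + p.2 = k), f p) ≤ g * c := by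
  calc μ (⋃ p ∈ (S ×ˢ S).filter (fun p => p.1 + p.2 = k), f p)
      ≤ ∑ p ∈ (S ×ˢ S).filter (fun p => p.1 + p.2 = k), μ (f p) := measure_biUnion_finset_le _ _
    _ ≤ ((S ×ˢ S).filter (fun p => p.1 + p.2 = k)).card • c :=
        Finset.sum_le_card_nsmul _ _ _ fun p hp => hf p.1 p.2 (Finset.mem_filter.mp hp).2
    _ ≤ g * c := by rw [nsmul_eq_mul]; gcongr; exact_mod_cast hB k

theorem IsBStar.volume_le_of_subset_gridSet {g n : ℕ} {S : Finset ℤ} (hB : IsBStar g S)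
    {C : Set ℝ} (hC : C ⊆ gridSet n S) (hsym : IsSymmetricSet C) :
    volume C ≤ ENNReal.ofReal ((g : ℝ) / n) := by
  -- With `x / 0 = 0` every cell is empty for `n = 0`, so a point of `C` gives `0 < n`.
  rcases C.eq_empty_or_nonempty with rfl | ⟨x₀, hx₀⟩
  · simp
  obtain ⟨s₀, -, hx₀s⟩ := Set.mem_iUnion₂.mp (hC hx₀)
  have hn : (0 : ℝ) < n := by exact_mod_cast (floor_mul_eq_of_mem_gridCell hx₀s).1
  obtain ⟨u, hu⟩ := hsym.exists_sub_mem
  set M := ⌊u * n⌋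
  have hM_le : (M : ℝ) ≤ u * n := Int.floor_le _
  have hM_lt : u * n < M + 1 := Int.lt_floor_add_one _
  have hleft : 0 ≤ ((M : ℝ) + 1) / n - u := by rw [sub_nonneg, le_div_iff₀ hn]; linarith
  have hright : 0 ≤ u - (M : ℝ) / n := by rw [sub_nonneg, div_le_iff₀ hn]; linarith
  calc volume C
      ≤ _ := (measure_mono (subset_union_biUnion_reflectPiece hC hu)).trans
          (measure_union_le _ _)
    _ ≤ g * ENNReal.ofReal (((M : ℝ) + 1) / n - u) +
          g * ENNReal.ofReal (u - (M : ℝ) / n) := by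
        gcongr
        · refine hB.measure_biUnion_le volume _ (reflectPiece n u) fun s t hst => ?_
          have hst : (s : ℝ) + t = M + 1 := by exact_mod_cast hst
          simpa only [hst] using volume_reflectPiece_le_left s t u
        · refine hB.measure_biUnion_le volume _ (reflectPiece n u) fun s t hst => ?_
          have hst : (s : ℝ) + t - 2 = M := by
            linarith [show (s : ℝ) + t = M + 2 by exact_mod_cast hst]
          simpa only [hst] using volume_reflectPiece_le_right s t u
    _ = ENNReal.ofReal ((g : ℝ) / n) := by
        rw [← mul_add, ← ENNReal.ofReal_add hleft hright, ofReal_natCast_div]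
        congr 2
        ring

lemma DD_le_of_forall_volume_le {A : Set ℝ} {d : ℝ} (hd : 0 ≤ d)
    (h : ∀ C ⊆ A, IsSymmetricSet C → volume C ≤ ENNReal.ofReal d) : DD A ≤ d :=
  Real.sSup_le (by
    rintro _ ⟨C, hCA, -, hsym, rfl⟩
    exact ENNReal.toReal_le_of_le_ofReal hd (h C hCA hsym)) hd

lemma Δ_le_DD {A : Set ℝ} {ε : ℝ} (hA : A ⊆ Set.Ico 0 1) (hm : MeasurableSet A)
    (hv : volume A = ENNReal.ofReal ε) : Δ ε ≤ DD A :=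
  csInf_le ⟨0, by rintro _ ⟨B, -, -, -, rfl⟩; exact DD_nonneg B⟩ ⟨A, hA, hm, hv, rfl⟩

lemma exists_isBStar_card_eq_R (g n : ℕ) :
    ∃ S : Finset ℤ, S ⊆ Finset.Icc 1 (n : ℤ) ∧ IsBStar g S ∧ S.card = R g n :=
  Nat.sSup_mem (s := {k | ∃ S : Finset ℤ, S ⊆ Finset.Icc 1 (n : ℤ) ∧ IsBStar g S ∧ S.card = k})
    ⟨0, ∅, by simp, fun _ => by simp, rfl⟩
    ⟨(Finset.Icc 1 (n : ℤ)).card, by rintro _ ⟨S, hS, -, rfl⟩; exact Finset.card_le_card hS⟩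

theorem delta_from_R_general (g n : ℕ) :
    Δ ((R g n : ℝ) / n) ≤ (g : ℝ) / n := by
  obtain ⟨S, hSn, hB, hcard⟩ := exists_isBStar_card_eq_R g n
  calc Δ ((R g n : ℝ) / n) ≤ DD (gridSet n S) :=
        Δ_le_DD (gridSet_subset_Ico hSn) (measurableSet_gridSet n S)
          (hcard ▸ volume_gridSet n S)
    _ ≤ g / n := DD_le_of_forall_volume_le (by positivity) fun _ hCA hsym =>
        hB.volume_le_of_subset_gridSet hCA hsym

theorem delta_from_R (g n : ℕ) (hg : 1 ≤ g) (hgn : g ≤ n) :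
    Δ ((R g n : ℝ) / n) ≤ (g : ℝ) / n :=
  delta_from_R_general g n
end
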